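/- arXiv:2004.04508 — 4 statements merged into one kernel-verified Lean document; each statement's English description precedes it below -/
import Mathlib

section
/- (Strict form of feasibility at a generic parameter.) Let W ⊆ ℝ^E be a linear subspace and h ∈ ℝ^E a parameter such that ⟨h, γ⟩ ≠ 0 for every circuit γ of W. Then a sign vector α : E → {+1,−1} is h-feasible if and only if ⟨h, u⟩ > 0 for every nonzero u ∈ W satisfying α(e)·u(e) ≥ 0 for all e ∈ E. (Equivalently: for generic h, feasibility of α is equivalent to the functional ⟨−h,·⟩ being bounded above and proper on the corresponding cone of the Gale dual arrangement.) -/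
/-!
Write `O_α` for the open orthant `{v | α e * v e > 0}` and `P = Wᗮ`.

If `α` is feasible, witnessed by `v`, then `⟨h, u⟩ = ⟨v, u⟩ = ∑ v e * u e ≥ 0` for every `u ∈ W` of
sign `α`, each term being nonnegative. If the sum vanishes, `v` vanishes on the support of `u`,
hence is orthogonal to a circuit `γ` of `W` supported there, and `⟨h, γ⟩ = ⟨v, γ⟩ = 0` contradicts
genericity.

Conversely, if `h ∉ O_α + P`, separating `h` from this open convex set gives a functional
`⟨u, ·⟩` with `⟨u, a + x⟩ < ⟨u, h⟩` for all `a ∈ O_α`, `x ∈ P`. Since `O_α` is a cone and `P` a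
subspace, `u ⊥ P` (so `u ∈ W`), `α e * u e ≤ 0` and `⟨u, h⟩ ≥ 0`: the vector `-u` violates the
positivity hypothesis. So even a strictly feasible `v` exists.
-/

/-- The standard inner product on `ℝ^E`. -/
noncomputable def dot {E : Type*} [Fintype E] (x y : E → ℝ) : ℝ := ∑ e, x e * y e

/-- The orthogonal complement of a subspace `W ⊆ ℝ^E` with respect to the
standard inner product. -/
def perp {E : Type*} [Fintype E] (W : Submodule ℝ (E → ℝ)) : Set (E → ℝ) :=
  {u | ∀ w ∈ W, dot w u = 0}

/-- A sign vector `α` is `h`-feasible if there exists `v ∈ ℝ^E` with `v - h ∈ Wᗮ`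
and `α e * v e ≥ 0` for all `e`. -/
def IsFeasible {E : Type*} [Fintype E] (W : Submodule ℝ (E → ℝ)) (h α : E → ℝ) : Prop :=
  ∃ v : E → ℝ, v - h ∈ perp W ∧ ∀ e, 0 ≤ α e * v e

/-- A circuit of a subset `U ⊆ ℝ^E` is a nonzero element of `U` whose support is
minimal under inclusion among supports of nonzero elements of `U`. -/
def IsCircuit {E : Type*} [Fintype E] (U : Set (E → ℝ)) (u : E → ℝ) : Prop :=
  u ∈ U ∧ u ≠ 0 ∧
    ∀ w ∈ U, w ≠ 0 → {e | w e ≠ 0} ⊆ {e | u e ≠ 0} → {e | w e ≠ 0} = {e | u e ≠ 0}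

open Matrix Pointwise

noncomputable abbrev dotBilin (E : Type*) [Fintype E] : LinearMap.BilinForm ℝ (E → ℝ) :=
  dotProductBilin ℝ ℝ

def posOrthant {E : Type*} (α : E → ℝ) : Set (E → ℝ) := {v | ∀ e, 0 < α e * v e}

def IsStrictlyFeasible {E : Type*} [Fintype E] (W : Submodule ℝ (E → ℝ)) (h α : E → ℝ) : Prop :=
  ∃ v : E → ℝ, v - h ∈ perp W ∧ v ∈ posOrthant α

lemma nonpos_and_nonneg_of_forall_pos_mul_lt {b c : ℝ} (H : ∀ t : ℝ, 0 < t → t * b < c) :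
    b ≤ 0 ∧ 0 ≤ c := by
  have hb : b ≤ 0 := by
    by_contra! hb
    have := H ((|c| + 1) / b) (by positivity)
    rw [div_mul_cancel₀ _ hb.ne'] at this
    linarith [le_abs_self c]
  refine ⟨hb, ?_⟩
  by_contra! hc
  have hb' : b < 0 := by linarith [H 1 one_pos]
  have := H (c / b) (div_pos_of_neg_of_neg hc hb')
  rw [div_mul_cancel₀ _ hb'.ne] at this
  exact lt_irrefl c this

section posOrthant

variable {E : Type*} {α : E → ℝ}

lemma convex_posOrthant (α : E → ℝ) : Convex ℝ (posOrthant α) := by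
  simp only [posOrthant, Set.ofPred_forall]
  exact convex_iInter fun e =>
    convex_halfSpace_gt ⟨fun x y => by simp [mul_add], fun c x => by simp [mul_left_comm]⟩ 0

lemma isOpen_posOrthant [Finite E] (α : E → ℝ) : IsOpen (posOrthant α) := by
  simp only [posOrthant, Set.ofPred_forall]
  exact isOpen_iInter_of_finite fun e =>
    isOpen_lt continuous_const (continuous_const.mul (continuous_apply e))

lemma self_mem_posOrthant (hα : ∀ e, α e ≠ 0) : α ∈ posOrthant α :=
  fun e => mul_self_pos.mpr (hα e)

lemma smul_mem_posOrthant {v : E → ℝ} (hv : v ∈ posOrthant α) {t : ℝ} (ht : 0 < t) :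
    t • v ∈ posOrthant α :=
  fun e => by simpa [mul_left_comm] using mul_pos ht (hv e)

lemma add_smul_single_mem_posOrthant [DecidableEq E] (hα : ∀ e, α e ≠ 0) (e : E) {t : ℝ}
    (ht : 0 ≤ t) : α + t • Pi.single e (α e) ∈ posOrthant α := by
  intro e'
  have := mul_self_pos.mpr (hα e')
  rcases eq_or_ne e' e with rfl | he
  · simp only [Pi.add_apply, Pi.smul_apply, Pi.single_eq_same, smul_eq_mul]
    nlinarith
  · simpa [he] using this

end posOrthant

section dot

variable {E : Type*} [Fintype E]

lemma dot_eq_dotProduct (x y : E → ℝ) : dot x y = x ⬝ᵥ y := rfl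

lemma perp_eq_orthogonal (W : Submodule ℝ (E → ℝ)) :
    perp W = (dotBilin E).orthogonal W := rfl

lemma nondegenerate_dotBilin : (dotBilin E).Nondegenerate :=
  .ofSeparatingLeft fun x hx => dotProduct_self_eq_zero.mp (hx x)

lemma isRefl_dotBilin : (dotBilin E).IsRefl := fun x y hxy => by
  simpa [dotProduct_comm] using hxy

lemma mem_of_forall_mem_perp_dot_eq_zero {W : Submodule ℝ (E → ℝ)} {u : E → ℝ}
    (hu : ∀ x ∈ perp W, dot x u = 0) : u ∈ W := by
  rw [← LinearMap.BilinForm.orthogonal_orthogonal nondegenerate_dotBilin isRefl_dotBilin W]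
  exact fun x hx => hu x hx

lemma exists_dot_eq (f : (E → ℝ) →ₗ[ℝ] ℝ) : ∃ u : E → ℝ, ∀ v, f v = dot u v := by
  classical
  exact ⟨(dotProductEquiv ℝ E).symm f, fun v => by
    rw [dot_eq_dotProduct, ← dotProductEquiv_apply_apply, LinearEquiv.apply_symm_apply]⟩

lemma dot_eq_dot_of_sub_mem_perp {W : Submodule ℝ (E → ℝ)} {h v u : E → ℝ}
    (hv : v - h ∈ perp W) (hu : u ∈ W) : dot h u = dot v u := by
  have := hv u hu
  rw [dot_eq_dotProduct, dotProduct_sub] at this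
  rw [dot_eq_dotProduct, dot_eq_dotProduct, dotProduct_comm h, dotProduct_comm v]
  linarith

lemma dot_eq_zero_of_support_subset {v u γ : E → ℝ} (hvu : ∀ e, v e * u e = 0)
    (hγ : {e | γ e ≠ 0} ⊆ {e | u e ≠ 0}) : dot v γ = 0 :=
  Finset.sum_eq_zero fun e _ => by
    by_cases hγe : γ e = 0
    · simp [hγe]
    · simp [(mul_eq_zero.mp (hvu e)).resolve_right (hγ hγe)]

end dot

lemma exists_isCircuit_support_subset {E : Type*} [Fintype E] {W : Submodule ℝ (E → ℝ)}
    {u : E → ℝ} (hu : u ∈ W) (hu0 : u ≠ 0) :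
    ∃ γ, IsCircuit (W : Set (E → ℝ)) γ ∧ {e | γ e ≠ 0} ⊆ {e | u e ≠ 0} := by
  obtain ⟨γ, ⟨hγW, hγ0, hγu⟩, hmin⟩ := Set.Finite.exists_minimalFor' (fun w => {e | w e ≠ 0})
    {w | w ∈ W ∧ w ≠ 0 ∧ {e | w e ≠ 0} ⊆ {e | u e ≠ 0}} (Set.toFinite _) ⟨u, hu, hu0, subset_rfl⟩
  exact ⟨γ, ⟨hγW, hγ0, fun w hw hw0 hwγ =>
    le_antisymm hwγ (hmin ⟨hw, hw0, hwγ.trans hγu⟩ hwγ)⟩, hγu⟩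

section feasibility

variable {E : Type*} [Fintype E] {W : Submodule ℝ (E → ℝ)} {h α : E → ℝ}

lemma IsFeasible.dot_pos_of_generic
    (hgen : ∀ γ : E → ℝ, IsCircuit (W : Set (E → ℝ)) γ → dot h γ ≠ 0)
    (hα : ∀ e, α e ≠ 0) (hfeas : IsFeasible W h α) {u : E → ℝ} (hu : u ∈ W) (hu0 : u ≠ 0)
    (hαu : ∀ e, 0 ≤ α e * u e) : 0 < dot h u := by
  obtain ⟨v, hv, hαv⟩ := hfeas
  have hvu : ∀ e, 0 ≤ v e * u e := fun e =>
    (mul_nonneg_iff_of_pos_left (mul_self_pos.mpr (hα e))).mp <| by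
      nlinarith [mul_nonneg (hαv e) (hαu e)]
  rw [dot_eq_dot_of_sub_mem_perp hv hu]
  refine (Finset.sum_nonneg fun e _ => hvu e).lt_of_ne fun hsum => ?_
  have hvu0 : ∀ e, v e * u e = 0 := fun e =>
    (Finset.sum_eq_zero_iff_of_nonneg fun e _ => hvu e).mp hsum.symm e (Finset.mem_univ e)
  obtain ⟨γ, hγ, hγu⟩ := exists_isCircuit_support_subset hu hu0
  exact hgen γ hγ <| by
    rw [dot_eq_dot_of_sub_mem_perp hv hγ.1]
    exact dot_eq_zero_of_support_subset hvu0 hγu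

lemma IsStrictlyFeasible.isFeasible (hs : IsStrictlyFeasible W h α) : IsFeasible W h α :=
  let ⟨v, hv, hαv⟩ := hs
  ⟨v, hv, fun e => (hαv e).le⟩

lemma exists_dot_add_lt_of_not_isStrictlyFeasible (hnot : ¬IsStrictlyFeasible W h α) :
    ∃ u : E → ℝ, ∀ a ∈ posOrthant α, ∀ x ∈ perp W, dot u a + dot u x < dot u h := by
  set P := (dotBilin E).orthogonal W
  have hh : h ∉ posOrthant α + (P : Set (E → ℝ)) := by
    rintro ⟨v, hv, x, hx, rfl⟩
    refine hnot ⟨v, ?_, hv⟩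
    rw [perp_eq_orthogonal, sub_add_cancel_left]
    exact P.neg_mem hx
  obtain ⟨f, hf⟩ := geometric_hahn_banach_open_point
    ((convex_posOrthant α).add P.convex) (isOpen_posOrthant α).add_right hh
  obtain ⟨u, hu⟩ := exists_dot_eq f.toLinearMap
  exact ⟨u, fun a ha x hx => by
    simpa only [ContinuousLinearMap.coe_coe, ← hu, map_add] using
      hf (a + x) (Set.add_mem_add ha hx)⟩

lemma isStrictlyFeasible_of_forall_dot_pos (hα : ∀ e, α e ≠ 0)
    (hpos : ∀ u ∈ W, u ≠ 0 → (∀ e, 0 ≤ α e * u e) → 0 < dot h u) :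
    IsStrictlyFeasible W h α := by
  classical
  by_contra hnot
  obtain ⟨u, hsep⟩ := exists_dot_add_lt_of_not_isStrictlyFeasible hnot
  set P := (dotBilin E).orthogonal W
  have hαO := self_mem_posOrthant hα
  have huW : u ∈ W := mem_of_forall_mem_perp_dot_eq_zero fun x hx => by
    have hle : ∀ y ∈ P, dot u y ≤ 0 := fun y hy =>
      (nonpos_and_nonneg_of_forall_pos_mul_lt (c := dot u h - dot u α) fun t _ => by
        have := hsep α hαO (t • y) (P.smul_mem t hy)
        simp only [dot_eq_dotProduct, dotProduct_smul, smul_eq_mul] at this ⊢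
        linarith).1
    have hneg := hle (-x) (P.neg_mem hx)
    rw [dot_eq_dotProduct, dotProduct_neg, neg_nonpos] at hneg
    rw [dot_eq_dotProduct, dotProduct_comm]
    exact le_antisymm (hle x hx) hneg
  have hαu : ∀ e, α e * u e ≤ 0 := fun e =>
    (nonpos_and_nonneg_of_forall_pos_mul_lt (c := dot u h - dot u α) fun t ht => by
      have := hsep _ (add_smul_single_mem_posOrthant hα e ht.le) 0 P.zero_mem
      simp only [dot_eq_dotProduct, dotProduct_add, dotProduct_smul, dotProduct_single,
        dotProduct_zero, smul_eq_mul, mul_comm (u e)] at this ⊢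
      linarith).1
  have hhu : 0 ≤ dot u h :=
    (nonpos_and_nonneg_of_forall_pos_mul_lt fun t ht => by
      simpa [dot_eq_dotProduct, dotProduct_smul] using
        hsep (t • α) (smul_mem_posOrthant hαO ht) 0 P.zero_mem).2
  have hu0 : u ≠ 0 := by
    rintro rfl
    simpa [dot_eq_dotProduct] using hsep α hαO 0 P.zero_mem
  have := hpos (-u) (W.neg_mem huW) (neg_ne_zero.mpr hu0) fun e => by simpa using hαu e
  rw [dot_eq_dotProduct, dotProduct_comm, neg_dotProduct] at this
  exact hhu.not_gt (neg_pos.mp this)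

end feasibility

/-- Strict form of feasibility at a generic parameter: if `⟨h, γ⟩ ≠ 0` for every
circuit `γ` of `W`, then `α` is `h`-feasible iff `⟨h, u⟩ > 0` for every nonzero
`u ∈ W` with `α e * u e ≥ 0` for all `e`. -/
theorem feasible_iff_strict_positive_of_generic {E : Type*} [Fintype E]
    (W : Submodule ℝ (E → ℝ)) (h : E → ℝ)
    (hgen : ∀ γ : E → ℝ, IsCircuit (W : Set (E → ℝ)) γ → dot h γ ≠ 0)
    (α : E → ℝ) (hα : ∀ e, α e = 1 ∨ α e = -1) :
    IsFeasible W h α ↔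
      ∀ u ∈ W, u ≠ 0 → (∀ e, 0 ≤ α e * u e) → 0 < dot h u := by
  have hα0 : ∀ e, α e ≠ 0 := fun e => by rcases hα e with he | he <;> simp [he]
  exact ⟨fun hfeas _ hu hu0 hαu => hfeas.dot_pos_of_generic hgen hα0 hu hu0 hαu,
    fun hpos => (isStrictlyFeasible_of_forall_dot_pos hα0 hpos).isFeasible⟩
end

section
/- (The set of bounded chambers depends only on the equivariant chamber of the cocharacter.) Let W ⊆ ℝ^E be a linear subspace. If z₀ and z₁ belong to the same connected component of the set { z ∈ ℝ^E : ⟨z, χ⟩ ≠ 0 for every cocircuit χ (circuit of Wᗮ) } (the complement of the root hyperplanes χᗮ in 𝔱), then for every sign vector α : E → {+1,−1}, α is z₀-bounded if and only if α is z₁-bounded. -/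
/-- The cone `C_α := { u ∈ Wᗮ : α e * u e ≥ 0 for all e }`. -/
def cone {E : Type*} [Fintype E] (W : Submodule ℝ (E → ℝ)) (α : E → ℝ) : Set (E → ℝ) :=
  {u | u ∈ perp W ∧ ∀ e, 0 ≤ α e * u e}

/-- A sign vector `α` is `z`-bounded if `u ↦ ⟨z, u⟩` is bounded above on `C_α`. -/
def IsBoundedSV {E : Type*} [Fintype E] (W : Submodule ℝ (E → ℝ)) (z α : E → ℝ) : Prop :=
  BddAbove ((fun u => dot z u) '' cone W α)

/-!
`α` is `z`-bounded iff `⟨z, ·⟩ ≤ 0` on the cone `C_α`. If moreover `z` avoids the root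
hyperplanes, then `⟨z, u⟩ < 0` for every nonzero `u ∈ C_α`: otherwise take such a `u` with
`⟨z, u⟩ = 0` and inclusion-minimal support. For `w ∈ Wᗮ` supported inside `supp u`, the line
`u + t w` stays in `C_α` for small `|t|`, so `⟨z, w⟩ = 0`; moving along it until a coordinate
vanishes stays in `C_α`, so minimality forces `supp w = supp u`, i.e. `u` is a cocircuit with
`⟨z, u⟩ = 0`. Strict negativity on the compact set of unit vectors of `C_α` survives small
perturbations of `z`, so the closed set of `z` for which `α` is bounded is also open in the
complement of the root hyperplanes, hence contains or misses each of its connected components.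
-/

open Function Filter Topology

theorem IsPreconnected.mem_iff_mem_of_inter_subset_interior {X : Type*}
    [TopologicalSpace X] {S T : Set X} (hS : IsPreconnected S) (hT : IsClosed T)
    (hST : S ∩ T ⊆ interior T) {x y : X} (hx : x ∈ S) (hy : y ∈ S) : x ∈ T ↔ y ∈ T := by
  suffices ∀ {a}, a ∈ S → a ∈ T → S ⊆ T from ⟨fun h => this hx h hy, fun h => this hy h hx⟩
  intro a ha haT
  have hSint : S ⊆ interior T :=
    hS.subset_of_closure_inter_subset isOpen_interior ⟨a, ha, hST ⟨ha, haT⟩⟩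
      fun b ⟨hbT, hbS⟩ => hST ⟨hbS, closure_minimal interior_subset hT hbT⟩
  exact hSint.trans interior_subset

section Cone

variable {E : Type*} [Fintype E] {W : Submodule ℝ (E → ℝ)} {α z u w : E → ℝ}

theorem dot_add_right (z u w : E → ℝ) : dot z (u + w) = dot z u + dot z w :=
  dotProduct_add z u w

theorem dot_smul_right (z u : E → ℝ) (t : ℝ) : dot z (t • u) = t * dot z u :=
  dotProduct_smul t z u

theorem dot_zero_right (z : E → ℝ) : dot z 0 = 0 := dotProduct_zero z

theorem continuous_dot : Continuous fun p : (E → ℝ) × (E → ℝ) => dot p.1 p.2 :=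
  continuous_fst.dotProduct continuous_snd

theorem add_mem_perp (hu : u ∈ perp W) (hw : w ∈ perp W) : u + w ∈ perp W := fun x hx => by
  rw [dot_add_right, hu x hx, hw x hx, add_zero]

theorem smul_mem_perp (t : ℝ) (hu : u ∈ perp W) : t • u ∈ perp W := fun x hx => by
  rw [dot_smul_right, hu x hx, mul_zero]

theorem isClosed_perp : IsClosed (perp W) := by
  simp only [perp, Set.ofPred_forall]
  exact isClosed_biInter fun x _ =>
    isClosed_eq (continuous_const.dotProduct continuous_id) continuous_const

theorem isClosed_cone : IsClosed (cone W α) := by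
  simp only [cone, Set.ofPred_and, Set.ofPred_mem_eq, Set.ofPred_forall]
  exact isClosed_perp.inter
    (isClosed_iInter fun e => isClosed_le continuous_const (by fun_prop))

theorem isClosed_setOf_forall_dot_nonpos (C : Set (E → ℝ)) :
    IsClosed {z : E → ℝ | ∀ u ∈ C, dot z u ≤ 0} := by
  simp only [Set.ofPred_forall]
  exact isClosed_biInter fun u _ =>
    isClosed_le (continuous_id.dotProduct continuous_const) continuous_const

theorem smul_mem_cone {t : ℝ} (ht : 0 ≤ t) (hu : u ∈ cone W α) : t • u ∈ cone W α :=
  ⟨smul_mem_perp t hu.1, fun e => by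
    simpa only [Pi.smul_apply, smul_eq_mul, mul_left_comm] using mul_nonneg ht (hu.2 e)⟩

theorem isBoundedSV_iff_forall_dot_nonpos :
    IsBoundedSV W z α ↔ ∀ u ∈ cone W α, dot z u ≤ 0 := by
  refine ⟨fun ⟨M, hM⟩ u hu => ?_, fun h => ⟨0, Set.forall_mem_image.2 h⟩⟩
  by_contra! hpos
  obtain ⟨n, hn⟩ := exists_nat_gt (M / dot z u)
  have hnM := hM (Set.mem_image_of_mem _ (smul_mem_cone n.cast_nonneg hu))
  rw [dot_smul_right] at hnM
  rw [div_lt_iff₀ hpos] at hn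
  linarith

theorem eventually_add_smul_mem_cone (hu : u ∈ cone W α) (hw : w ∈ perp W)
    (hwu : support w ⊆ support u) : ∀ᶠ t in 𝓝 (0 : ℝ), u + t • w ∈ cone W α := by
  have hcoord : ∀ e, ∀ᶠ t in 𝓝 (0 : ℝ), 0 ≤ α e * (u + t • w) e := fun e => by
    rcases (hu.2 e).lt_or_eq with hpos | hzero
    · have hcont : Continuous fun t : ℝ => α e * (u + t • w) e := by fun_prop
      exact ((hcont.tendsto' 0 _ (by simp)).eventually_const_lt hpos).mono
        fun _ => le_of_lt
    · refine Eventually.of_forall fun t => ?_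
      rcases mul_eq_zero.1 hzero.symm with hα | hue
      · simp [hα]
      · simp [hue, notMem_support.1 fun h => hwu h hue]
  filter_upwards [eventually_all.2 hcoord] with t ht
  exact ⟨add_mem_perp hu.1 (smul_mem_perp t hw), ht⟩

theorem dot_eq_zero_of_support_subset_s4 (hnonpos : ∀ v ∈ cone W α, dot z v ≤ 0)
    (hu : u ∈ cone W α) (huz : dot z u = 0) (hw : w ∈ perp W) (hwu : support w ⊆ support u) :
    dot z w = 0 := by
  have hmax : IsLocalMax (fun t : ℝ => t * dot z w) 0 := by
    filter_upwards [eventually_add_smul_mem_cone hu hw hwu] with t ht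
    simpa [dot_add_right, dot_smul_right, huz] using hnonpos _ ht
  exact hmax.hasDerivAt_eq_zero (by simpa using (hasDerivAt_id (0 : ℝ)).mul_const (dot z w))

theorem mul_add_nonneg_of_abs_le {a b c : ℝ} (hab : 0 ≤ a * b) (hcb : |c| ≤ |b|) :
    0 ≤ a * (b + c) := by
  rcases lt_trichotomy b 0 with hb | rfl | hb
  · have hc := abs_le.1 (hcb.trans_eq (abs_of_neg hb))
    exact mul_nonneg_of_nonpos_of_nonpos (nonpos_of_mul_nonneg_left hab hb) (by linarith)
  · simp_all
  · have hc := abs_le.1 (hcb.trans_eq (abs_of_pos hb))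
    exact mul_nonneg (nonneg_of_mul_nonneg_left hab hb) (by linarith)

theorem exists_add_smul_mem_cone_apply_eq_zero (hu : u ∈ cone W α) (hw : w ∈ perp W)
    (hw0 : w ≠ 0) :
    ∃ t : ℝ, u + t • w ∈ cone W α ∧ ∃ e ∈ support w, (u + t • w) e = 0 := by
  classical
  -- `t = -u e' / w e'` with `|u e' / w e'|` minimal: then `|t w e| ≤ |u e|` for all `e`, so the
  -- step keeps every sign of `u`, and it kills the coordinate `e'`.
  obtain ⟨e₀, he₀⟩ := Function.ne_iff.1 hw0
  obtain ⟨e', he', hmin⟩ := (support w).toFinset.exists_min_image (fun e => |u e / w e|)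
    ⟨e₀, by simpa using he₀⟩
  rw [Set.mem_toFinset] at he'
  refine ⟨-(u e' / w e'), ⟨add_mem_perp hu.1 (smul_mem_perp _ hw), fun e => ?_⟩, e', he', ?_⟩
  · refine mul_add_nonneg_of_abs_le (hu.2 e) ?_
    by_cases hwe : w e = 0
    · simp [hwe]
    · have := hmin e (Set.mem_toFinset.2 hwe)
      rwa [Pi.smul_apply, smul_eq_mul, abs_mul, abs_neg, ← le_div_iff₀ (abs_pos.2 hwe),
        ← abs_div]
  · simp [div_mul_cancel₀ _ (show w e' ≠ 0 from he')]

theorem isCircuit_of_minimalFor (hnonpos : ∀ v ∈ cone W α, dot z v ≤ 0)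
    (hu : MinimalFor (fun v => v ∈ cone W α ∧ dot z v = 0 ∧ v ≠ 0) support u) :
    IsCircuit (perp W) u := by
  obtain ⟨⟨huC, huz, hu0⟩, hmin⟩ := hu
  refine ⟨huC.1, hu0, fun w hw hw0 hwu => ?_⟩
  by_contra hne
  obtain ⟨e₀, he₀u, he₀w⟩ := Set.exists_of_ssubset (hwu.ssubset_of_ne hne)
  obtain ⟨t, hv, e, hew, hve⟩ := exists_add_smul_mem_cone_apply_eq_zero huC hw hw0
  have hvz : dot z (u + t • w) = 0 := by
    rw [dot_add_right, dot_smul_right, huz,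
      dot_eq_zero_of_support_subset_s4 hnonpos huC huz hw hwu, mul_zero, add_zero]
  have hv0 : u + t • w ≠ 0 := fun h =>
    he₀u (by simpa [notMem_support.1 he₀w] using congr_fun h e₀)
  have hvu : support (u + t • w) ⊆ support u :=
    (support_add _ _).trans
      (Set.union_subset subset_rfl ((support_const_smul_subset t w).trans hwu))
  exact hmin ⟨hv, hvz, hv0⟩ hvu (hwu hew) hve

theorem dot_neg_of_mem_cone (hz : ∀ χ : E → ℝ, IsCircuit (perp W) χ → dot z χ ≠ 0)
    (hnonpos : ∀ v ∈ cone W α, dot z v ≤ 0) (hu : u ∈ cone W α) (hu0 : u ≠ 0) :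
    dot z u < 0 := by
  refine (hnonpos u hu).lt_of_ne fun huz => ?_
  obtain ⟨χ, hχ⟩ := exists_minimalFor_of_wellFoundedLT
    (fun v => v ∈ cone W α ∧ dot z v = 0 ∧ v ≠ 0) support ⟨u, hu, huz, hu0⟩
  exact hz χ (isCircuit_of_minimalFor hnonpos hχ) hχ.1.2.1

theorem eventually_forall_dot_nonpos (hz : ∀ χ : E → ℝ, IsCircuit (perp W) χ → dot z χ ≠ 0)
    (hnonpos : ∀ v ∈ cone W α, dot z v ≤ 0) :
    ∀ᶠ z' in 𝓝 z, ∀ u ∈ cone W α, dot z' u ≤ 0 := by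
  have hK : IsCompact (cone W α ∩ Metric.sphere 0 1) :=
    (isCompact_sphere 0 1).inter_left isClosed_cone
  have hneg : ∀ᶠ z' in 𝓝 z, ∀ u ∈ cone W α ∩ Metric.sphere 0 1, dot z' u < 0 :=
    hK.eventually_forall_of_forall_eventually fun u hu =>
      (isOpen_lt continuous_dot continuous_const).mem_nhds
        (dot_neg_of_mem_cone hz hnonpos hu.1 (Metric.ne_of_mem_sphere hu.2 one_ne_zero))
  filter_upwards [hneg] with z' hz' u hu
  rcases eq_or_ne u 0 with rfl | hu0
  · rw [dot_zero_right]
  · have hunit :=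
      hz' (‖u‖⁻¹ • u) ⟨smul_mem_cone (by positivity) hu, by simp [norm_smul, hu0]⟩
    rw [dot_smul_right] at hunit
    exact (Left.neg_of_mul_neg_right hunit (by positivity)).le

end Cone

/-- The set of bounded chambers depends only on the equivariant chamber of the
cocharacter: if `z₀` and `z₁` lie in the same connected component of the
complement of the root hyperplanes `χᗮ` (for `χ` a cocircuit, i.e. a circuit of
`Wᗮ`), then a sign vector `α` is `z₀`-bounded iff it is `z₁`-bounded. -/
theorem bounded_depends_only_on_equivariant_chamber {E : Type*} [Fintype E]
    (W : Submodule ℝ (E → ℝ)) (z₀ z₁ : E → ℝ)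
    (hcc : z₁ ∈ connectedComponentIn
      {z : E → ℝ | ∀ χ : E → ℝ, IsCircuit (perp W) χ → dot z χ ≠ 0} z₀) :
    ∀ α : E → ℝ, (∀ e, α e = 1 ∨ α e = -1) →
      (IsBoundedSV W z₀ α ↔ IsBoundedSV W z₁ α) := by
  intro α _
  have hz₀ := connectedComponentIn_nonempty_iff.1 ⟨z₁, hcc⟩
  simp only [isBoundedSV_iff_forall_dot_nonpos]
  exact isPreconnected_connectedComponentIn.mem_iff_mem_of_inter_subset_interior
    (isClosed_setOf_forall_dot_nonpos (cone W α))
    (fun z ⟨hzcc, hzbdd⟩ => mem_interior_iff_mem_nhds.2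
      (eventually_forall_dot_nonpos (connectedComponentIn_subset _ _ hzcc) hzbdd))
    (mem_connectedComponentIn hz₀) hcc
end

section
/- (Bases of a cographical arrangement are complements of spanning trees.) Let V be a nonempty finite set, E a finite set, and s, t : E → V maps with s(e) ≠ t(e) for all e ∈ E (an oriented finite multigraph Γ without loops). Assume Γ is connected, i.e. the equivalence relation on V generated by { (s(e), t(e)) : e ∈ E } is all of V × V. Let d : (V → ℤ) → (E → ℤ) be the coboundary map, (d f)(e) = f(t(e)) − f(s(e)), and let W_ℤ := image(d) ⊆ (E → ℤ) be the cut lattice, so that (E → ℤ)/W_ℤ ≅ H¹(Γ, ℤ). Then for a subset b ⊆ E, the images in (E → ℤ)/W_ℤ of the standard basis vectors { χ_e : e ∈ b } form a ℤ-basis of (E → ℤ)/W_ℤ if and only if E∖b is the edge set of a spanning tree of Γ, i.e. the equivalence relation on V generated by { (s(e), t(e)) : e ∈ E∖b } is all of V × V and |E∖b| = |V| − 1. -/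
/-!
Let `π : ℤ^E → ℤ^{E ∖ b}` be restriction and `d_T = π ∘ d` the coboundary of the
subgraph `T = E ∖ b`. The classes of `χ_e`, `e ∈ b`, form a basis of `ℤ^E / W` iff their
span `ker π` is a complement of `W = im d`, i.e. iff `π` maps `W` isomorphically onto `ℤ^T`:
`d_T` has the same kernel as `d` (the constants, so `T` is connected) and `d_T` is
surjective. For connected `T`, rank–nullity gives `rank (im d_T) = |V| - 1`, so surjectivity
forces `|T| = |V| - 1`. Conversely, if `|T| = |V| - 1`, every edge `e` of `T` is a bridge
(otherwise `T - e` would be connected with too few edges), and the indicator of the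
component of `t e` in `T - e` has coboundary `χ_e`.
-/

/-- The coboundary map `d : (V → ℤ) → (E → ℤ)`, `(d f)(e) = f(t e) - f(s e)`,
of an oriented multigraph with source and target maps `s, t : E → V`. -/
def cobdry {V E : Type*} (s t : E → V) : (V → ℤ) →ₗ[ℤ] (E → ℤ) where
  toFun f := fun e => f (t e) - f (s e)
  map_add' f g := by funext e; simp [Pi.add_apply]; ring
  map_smul' c f := by funext e; simp [Pi.smul_apply, smul_eq_mul]; ring

/-- `T ⊆ E` is (the edge set of) a spanning tree of the oriented multigraph
with source and target maps `s, t : E → V`: the equivalence relation generated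
by the edges in `T` relates all vertices, and `|T| = |V| - 1`. -/
def SpanningTree {V E : Type*} [Fintype V] (s t : E → V) (T : Set E) : Prop :=
  (∀ v w : V, Relation.EqvGen (fun a b => ∃ e ∈ T, s e = a ∧ t e = b) v w) ∧
    T.ncard = Fintype.card V - 1

section LinearAlgebra

open LinearMap Submodule

variable {R M N ι : Type*} [Ring R] [AddCommGroup M] [Module R M] [AddCommGroup N] [Module R N]

theorem Module.Basis.exists_eq_iff_bijective_linearCombination [Fintype ι] (v : ι → M) :
    (∃ bas : Module.Basis ι R M, ∀ i, bas i = v i) ↔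
      Function.Bijective (Fintype.linearCombination R v) := by
  rw [Function.Bijective, ← linearIndependent_iff_injective_fintypeLinearCombination,
    ← span_range_eq_top_iff_surjective_fintypeLinearCombination]
  constructor
  · rintro ⟨bas, hbas⟩
    obtain rfl : ⇑bas = v := funext hbas
    exact ⟨bas.linearIndependent, bas.span_eq⟩
  · rintro ⟨hli, hsp⟩
    exact ⟨.mk hli hsp.ge, Module.Basis.mk_apply hli hsp.ge⟩

theorem Fintype.linearCombination_comp [Fintype ι] [DecidableEq ι] (f : M →ₗ[R] N)
    (v : ι → M) :
    Fintype.linearCombination R (f ∘ v) = f ∘ₗ Fintype.linearCombination R v := by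
  ext i
  simp

theorem Submodule.bijective_mkQ_comp_iff_isCompl {i : N →ₗ[R] M} (hi : Function.Injective i)
    (W : Submodule R M) : Function.Bijective (W.mkQ ∘ₗ i) ↔ IsCompl (range i) W := by
  rw [Function.Bijective, isCompl_iff, codisjoint_iff, ← range_eq_top, range_comp,
    map_mkQ_eq_top, sup_comm, ← ker_eq_bot, ker_comp, ker_mkQ, disjoint_def]
  refine and_congr_left fun _ => ?_
  simp only [eq_bot_iff, SetLike.le_def, mem_comap, mem_bot, mem_range, forall_exists_index,
    forall_apply_eq_imp_iff]
  exact ⟨fun h x hx => by rw [h hx, map_zero], fun h x hx => hi (by rw [h x hx, map_zero])⟩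

theorem LinearMap.isCompl_ker_range_iff {U : Type*} [AddCommGroup U] [Module R U]
    {π : M →ₗ[R] N} (hπ : Function.Surjective π) (d : U →ₗ[R] M) :
    IsCompl (ker π) (range d) ↔
      ker (π ∘ₗ d) ≤ ker d ∧ Function.Surjective (π ∘ₗ d) := by
  rw [isCompl_iff, codisjoint_iff, ← range_eq_top, range_comp,
    map_eq_top_iff (range_eq_top.2 hπ), sup_comm, disjoint_def]
  refine and_congr_left fun _ => ?_
  simp only [SetLike.le_def, mem_ker, comp_apply, mem_range, forall_exists_index]
  exact ⟨fun h y hy => h _ hy y rfl, fun h _ hx y hy => hy ▸ h (hy ▸ hx)⟩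

end LinearAlgebra

section Pi

open LinearMap Submodule

variable {R η : Type*} [Ring R] [Finite η] [DecidableEq η]

theorem Pi.linearIndependent_single_one_subtype (b : Set η) :
    LinearIndependent R (fun e : b => (Pi.single (e : η) 1 : η → R)) := by
  convert (Pi.basisFun R η).linearIndependent.comp _ Subtype.val_injective
  simp

theorem Pi.span_single_one_eq_ker_funLeft_compl (b : Set η) :
    span R (Set.range fun e : b => (Pi.single (e : η) 1 : η → R)) =
      ker (funLeft R R (Subtype.val : ↥bᶜ → η)) := by
  ext x
  have hrange :
      (Set.range fun e : b => (Pi.single (e : η) 1 : η → R)) = Pi.basisFun R η '' b := by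
    simp [Set.image_eq_range]
  rw [hrange, Module.Basis.mem_span_image, mem_ker, funext_iff]
  simp only [Set.subset_def, Finset.mem_coe, Finsupp.mem_support_iff, Pi.basisFun_repr,
    funLeft_apply, Pi.zero_apply, Subtype.forall, Set.mem_compl_iff]
  exact forall_congr' fun e => not_imp_comm

end Pi

theorem Relation.EqvGen.eq_of_forall_rel {α β : Type*} {r : α → α → Prop} {F : α → β}
    (hF : ∀ a b, r a b → F a = F b) {a b : α} (h : Relation.EqvGen r a b) : F a = F b :=
  congrArg (Quot.lift F hF) (Quot.eqvGen_sound h)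

namespace Multigraph

open LinearMap Module

variable {V E E' : Type*} (s t : E → V)

def Adj (a b : V) : Prop := ∃ e, s e = a ∧ t e = b

def Connected : Prop := ∀ v w, Relation.EqvGen (Adj s t) v w

open Classical in
noncomputable def componentIndicator (v : V) : V → ℤ :=
  fun u => if Quot.mk (Adj s t) u = Quot.mk (Adj s t) v then 1 else 0

variable {s t}

theorem componentIndicator_self (v : V) : componentIndicator s t v v = 1 := if_pos rfl

theorem componentIndicator_of_not_eqvGen {u v : V} (h : ¬ Relation.EqvGen (Adj s t) u v) :
    componentIndicator s t v u = 0 :=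
  if_neg (mt Quot.eqvGen_exact h)

theorem componentIndicator_eq_of_eqvGen (v : V) {a b : V} (h : Relation.EqvGen (Adj s t) a b) :
    componentIndicator s t v a = componentIndicator s t v b := by
  unfold componentIndicator
  rw [Quot.eqvGen_sound h]

theorem cobdry_eq_zero_iff {f : V → ℤ} : cobdry s t f = 0 ↔ ∀ e, f (s e) = f (t e) := by
  simp only [funext_iff, cobdry, LinearMap.coe_mk, AddHom.coe_mk, Pi.zero_apply, sub_eq_zero,
    eq_comm]

theorem eq_of_cobdry_eq_zero {f : V → ℤ} (hf : cobdry s t f = 0) {v w : V}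
    (h : Relation.EqvGen (Adj s t) v w) : f v = f w :=
  h.eq_of_forall_rel (by rintro _ _ ⟨e, rfl, rfl⟩; exact cobdry_eq_zero_iff.1 hf e)

theorem cobdry_componentIndicator (v : V) : cobdry s t (componentIndicator s t v) = 0 :=
  cobdry_eq_zero_iff.2 fun e =>
    componentIndicator_eq_of_eqvGen v (.rel _ _ ⟨e, rfl, rfl⟩)

theorem connected_iff_forall_cobdry_eq_zero :
    Connected s t ↔ ∀ f, cobdry s t f = 0 → ∀ v w, f v = f w := by
  refine ⟨fun h f hf v w => eq_of_cobdry_eq_zero hf (h v w), fun h v w => ?_⟩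
  by_contra hvw
  have := h _ (cobdry_componentIndicator w) v w
  rw [componentIndicator_of_not_eqvGen hvw, componentIndicator_self] at this
  exact zero_ne_one this

theorem Connected.ker_cobdry_le_iff (h : Connected s t) {s' t' : E' → V} :
    ker (cobdry s' t') ≤ ker (cobdry s t) ↔ Connected s' t' := by
  rw [connected_iff_forall_cobdry_eq_zero]
  refine ⟨fun hle f hf => connected_iff_forall_cobdry_eq_zero.1 h f (hle hf),
    fun h' f hf => cobdry_eq_zero_iff.2 fun e => h' f hf _ _⟩

theorem Connected.ker_cobdry [Nonempty V] (h : Connected s t) :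
    ker (cobdry s t) = range (toSpanSingleton ℤ (V → ℤ) 1) := by
  ext f
  simp only [mem_ker, mem_range, toSpanSingleton_apply]
  refine ⟨fun hf => ?_, ?_⟩
  · obtain ⟨v₀⟩ := ‹Nonempty V›
    exact ⟨f v₀, funext fun v => by simp [eq_of_cobdry_eq_zero hf (h v v₀)]⟩
  · rintro ⟨n, rfl⟩
    exact cobdry_eq_zero_iff.2 fun e => by simp

theorem Connected.finrank_range_cobdry [Fintype V] [Nonempty V] (h : Connected s t) :
    finrank ℤ (range (cobdry s t)) = Fintype.card V - 1 := by
  have hker : finrank ℤ (ker (cobdry s t)) = 1 := by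
    rw [h.ker_cobdry, finrank_range_of_inj (smul_left_injective ℤ one_ne_zero), finrank_self]
  have := (ker (cobdry s t)).finrank_quotient_add_finrank
  rw [(cobdry s t).quotKerEquivRange.finrank_eq, hker, finrank_fintype_fun_eq_card] at this
  omega

theorem Connected.card_sub_one_le [Fintype V] [Nonempty V] [Fintype E] (h : Connected s t) :
    Fintype.card V - 1 ≤ Fintype.card E := by
  rw [← h.finrank_range_cobdry, ← finrank_fintype_fun_eq_card ℤ]
  exact Submodule.finrank_le _

theorem Connected.of_forall_eqvGen (h : Connected s t) {s' t' : E' → V}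
    (h' : ∀ e, Relation.EqvGen (Adj s' t') (s e) (t e)) : Connected s' t' := fun v w =>
  Quot.eqvGen_exact <| (h v w).eq_of_forall_rel <| by
    rintro _ _ ⟨e, rfl, rfl⟩
    exact Quot.eqvGen_sound (h' e)

theorem Connected.not_eqvGen_of_card_eq [Fintype V] [Nonempty V] [Fintype E] [DecidableEq E]
    (h : Connected s t) (hcard : Fintype.card E = Fintype.card V - 1) (e₀ : E) :
    ¬ Relation.EqvGen (Adj (fun e : {e // e ≠ e₀} => s e) (fun e => t e))
      (s e₀) (t e₀) := by
  intro h₀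
  have hconn : Connected (fun e : {e // e ≠ e₀} => s e) (fun e => t e) :=
    h.of_forall_eqvGen fun e =>
      if he : e = e₀ then he ▸ h₀ else .rel _ _ ⟨⟨e, he⟩, rfl, rfl⟩
  have hle := hconn.card_sub_one_le
  have hpos : 0 < Fintype.card E := Fintype.card_pos_iff.2 ⟨e₀⟩
  simp only [Fintype.card_subtype_compl, Fintype.card_unique] at hle
  omega

theorem cobdry_componentIndicator_of_not_eqvGen [DecidableEq E] {e₀ : E}
    (h₀ : ¬ Relation.EqvGen (Adj (fun e : {e // e ≠ e₀} => s e) (fun e => t e))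
      (s e₀) (t e₀)) :
    cobdry s t (componentIndicator (fun e : {e // e ≠ e₀} => s e) (fun e => t e) (t e₀)) =
      Pi.single e₀ 1 := by
  ext e
  by_cases he : e = e₀
  · subst he
    simp [cobdry, componentIndicator_self, componentIndicator_of_not_eqvGen h₀]
  · have hrel :
        Relation.EqvGen (Adj (fun e : {e // e ≠ e₀} => s e) (fun e => t e)) (s e) (t e) :=
      .rel _ _ ⟨⟨e, he⟩, rfl, rfl⟩
    simp [cobdry, Pi.single_eq_of_ne he, componentIndicator_eq_of_eqvGen _ hrel]

theorem Connected.cobdry_surjective_iff [Fintype V] [Nonempty V] [Fintype E] (h : Connected s t) :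
    Function.Surjective (cobdry s t) ↔ Fintype.card E = Fintype.card V - 1 := by
  classical
  refine ⟨fun hsurj => ?_, fun hcard => ?_⟩
  · rw [← h.finrank_range_cobdry, range_eq_top.2 hsurj, finrank_top, finrank_fintype_fun_eq_card]
  · rw [← range_eq_top, eq_top_iff, ← (Pi.basisFun ℤ E).span_eq, Submodule.span_le]
    rintro _ ⟨e₀, rfl⟩
    exact ⟨_, by rw [Pi.basisFun_apply,
      cobdry_componentIndicator_of_not_eqvGen (h.not_eqvGen_of_card_eq hcard e₀)]⟩

theorem connected_restrict_iff {T : Set E} :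
    Connected (fun e : T => s e) (fun e => t e) ↔
      ∀ v w : V, Relation.EqvGen (fun a b => ∃ e ∈ T, s e = a ∧ t e = b) v w := by
  unfold Connected Adj
  simp only [Subtype.exists, exists_prop]

end Multigraph

open LinearMap Multigraph in
theorem cographical_base_iff_complement_spanning_tree_general
    {V E : Type*} [Fintype V] [Nonempty V] [Fintype E] [DecidableEq E]
    (s t : E → V)
    (hconn : ∀ v w : V, Relation.EqvGen (fun a b => ∃ e, s e = a ∧ t e = b) v w)
    (b : Set E) :
    (∃ bas : Module.Basis b ℤ ((E → ℤ) ⧸ LinearMap.range (cobdry s t)),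
        ∀ e : b, bas e = Submodule.Quotient.mk (Pi.single (e : E) 1)) ↔
      SpanningTree s t bᶜ := by
  classical
  have hΓ : Connected s t := hconn
  set W := range (cobdry s t)
  set π := funLeft ℤ ℤ (Subtype.val : ↥bᶜ → E)
  have hπ : π ∘ₗ cobdry s t = cobdry (fun e : ↥bᶜ => s e) (fun e => t e) := rfl
  have hfamily : (fun e : b => Submodule.Quotient.mk (p := W) (Pi.single (e : E) 1)) =
      W.mkQ ∘ fun e : b => (Pi.single (e : E) 1 : E → ℤ) := rfl
  rw [Module.Basis.exists_eq_iff_bijective_linearCombination, hfamily,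
    Fintype.linearCombination_comp, Submodule.bijective_mkQ_comp_iff_isCompl
      (Pi.linearIndependent_single_one_subtype b).fintypeLinearCombination_injective,
    Fintype.range_linearCombination, Pi.span_single_one_eq_ker_funLeft_compl]
  rw [isCompl_ker_range_iff (funLeft_surjective_of_injective _ _ _ Subtype.val_injective), hπ,
    hΓ.ker_cobdry_le_iff, SpanningTree, ← connected_restrict_iff, Set.ncard_eq_toFinset_card',
    Set.toFinset_card]
  exact and_congr_right fun hT => hT.cobdry_surjective_iff

/-- Bases of a cographical arrangement are complements of spanning trees: for a
connected finite oriented multigraph without loops, the images of the standard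
basis vectors `{χ_e : e ∈ b}` form a ℤ-basis of `(E → ℤ)/W_ℤ ≅ H¹(Γ,ℤ)` (where
`W_ℤ` is the cut lattice, the image of the coboundary map) iff `E ∖ b` is the
edge set of a spanning tree. -/
theorem cographical_base_iff_complement_spanning_tree
    {V E : Type*} [Fintype V] [Nonempty V] [Fintype E] [DecidableEq E]
    (s t : E → V) (hst : ∀ e, s e ≠ t e)
    (hconn : ∀ v w : V, Relation.EqvGen (fun a b => ∃ e, s e = a ∧ t e = b) v w)
    (b : Set E) :
    (∃ bas : Module.Basis b ℤ ((E → ℤ) ⧸ LinearMap.range (cobdry s t)),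
        ∀ e : b, bas e = Submodule.Quotient.mk (Pi.single (e : E) 1)) ↔
      SpanningTree s t bᶜ :=
  cographical_base_iff_complement_spanning_tree_general s t hconn b
end

section
/- (Bases of the loop and periodic arrangements are lattice translates of finite bases.) Let E be a finite set, L ⊆ ℤ^E a subgroup, and W := span_ℝ(L) ⊆ ℝ^E. Assume the unimodularity property: for every subset a ⊆ E, if the coordinate projection W → ℝ^a, w ↦ (w(e))_{e∈a}, is bijective, then the coordinate projection L → ℤ^a, γ ↦ (γ(e))_{e∈a}, is bijective. Then for every finite subset c ⊆ E × ℤ the following are equivalent: (i) the linear map W → ℝ^c sending w to the family ((e,k) ↦ w(e))_{(e,k)∈c} is bijective; (ii) there exist a subset a ⊆ E with W → ℝ^a bijective and an element γ ∈ L such that c = { (e, γ(e)) : e ∈ a }. Consequently, the bases of the periodic arrangement (the finite subsets c ⊆ E×ℤ satisfying (i)) and the bases of the loop arrangement (the subsets s ⊆ E×ℤ whose complement c := (E×ℤ)∖s is finite and satisfies (i)) are exactly the ∂γ-translates, γ ∈ L, of the bases of the corresponding finite arrangement. -/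
/-!
If `W → ℝ^c` is onto, `c` cannot contain two points `(e, k) ≠ (e, k')` over the same `e`, so `c`
is the graph over `a := Prod.fst '' c` of a function `a → ℤ`, and `W → ℝ^c` is `W → ℝ^a`
reindexed along `c ≃ a`. Unimodularity makes `L → ℤ^a` onto, so that function is the
restriction of some `γ ∈ L`. Conversely a graph over a base `a` is in bijection with `a`.
-/

open Function Set

section GraphsOverCoordinates

variable {E K : Type*}

lemma eq_graph_of_forall_mem {s : Set (E × K)} {g : E → K} (hg : ∀ p ∈ s, g p.1 = p.2) :
    s = {p | p.1 ∈ Prod.fst '' s ∧ p.2 = g p.1} := by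
  ext p
  refine ⟨fun hp => ⟨mem_image_of_mem _ hp, (hg p hp).symm⟩, ?_⟩
  rintro ⟨⟨q, hq, hqp⟩, hp⟩
  have : p = q := Prod.ext hqp.symm (by rw [hp, ← hqp, hg q hq])
  exact this ▸ hq

lemma injOn_fst_graph (a : Set E) (g : E → K) :
    InjOn Prod.fst {p : E × K | p.1 ∈ a ∧ p.2 = g p.1} := by
  rintro p ⟨-, hp⟩ q ⟨-, hq⟩ hpq
  exact Prod.ext hpq (by rw [hp, hq, hpq])

lemma fst_image_graph (a : Set E) (g : E → K) :
    Prod.fst '' {p : E × K | p.1 ∈ a ∧ p.2 = g p.1} = a :=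
  Subset.antisymm (by rintro _ ⟨p, ⟨hp, -⟩, rfl⟩; exact hp)
    (fun e he => ⟨(e, g e), ⟨he, rfl⟩, rfl⟩)

lemma exists_snd_of_injOn_fst {s : Set (E × K)} (hs : InjOn Prod.fst s) :
    ∃ g : Prod.fst '' s → K, ∀ p (hp : p ∈ s), g ⟨p.1, mem_image_of_mem _ hp⟩ = p.2 := by
  let π := Equiv.Set.imageOfInjOn Prod.fst s hs
  refine ⟨fun e => (π.symm e).1.2, fun p hp => ?_⟩
  change (π.symm (π ⟨p, hp⟩)).1.2 = p.2
  rw [π.symm_apply_apply]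

end GraphsOverCoordinates

section EvaluationMaps

variable {X E K R : Type*} (F : X → E → R)

lemma injOn_fst_of_surjective_eval [Nontrivial R] {s : Set (E × K)}
    (h : Surjective fun (x : X) (p : s) => F x p.1.1) : InjOn Prod.fst s := by
  classical
  intro p hp q hq hpq
  by_contra hne
  obtain ⟨r₀, r₁, hr⟩ := exists_pair_ne R
  obtain ⟨x, hx⟩ := h fun r => if r = ⟨q, hq⟩ then r₁ else r₀
  have hxp : F x p.1 = r₀ := by
    simpa [Subtype.ext_iff, hne] using congrFun hx ⟨p, hp⟩
  have hxq : F x q.1 = r₁ := by simpa using congrFun hx ⟨q, hq⟩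
  exact hr (hxp.symm.trans (hpq ▸ hxq))

lemma bijective_eval_iff_of_injOn_fst {s : Set (E × K)} (hs : InjOn Prod.fst s) :
    Bijective (fun (x : X) (p : s) => F x p.1.1) ↔
      Bijective (fun (x : X) (e : Prod.fst '' s) => F x e.1) := by
  let π := Equiv.Set.imageOfInjOn Prod.fst s hs
  exact π.bijective.comp_right.of_comp_iff' fun (x : X) (e : Prod.fst '' s) => F x e.1

end EvaluationMaps

theorem periodic_bases_are_lattice_translates_of_finite_bases_general
    {E : Type*} (L : AddSubgroup (E → ℤ))
    (W : Submodule ℝ (E → ℝ))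
    (hunimod : ∀ a : Set E,
      Function.Bijective (fun (w : W) (e : a) => w.1 e.1) →
      Function.Bijective (fun (γ : L) (e : a) => γ.1 e.1)) :
    ∀ c : Finset (E × ℤ),
      Function.Bijective (fun (w : W) (p : c) => w.1 p.1.1) ↔
        ∃ a : Set E, Function.Bijective (fun (w : W) (e : a) => w.1 e.1) ∧
          ∃ γ ∈ L, (c : Set (E × ℤ)) = {p : E × ℤ | p.1 ∈ a ∧ p.2 = γ p.1} := by
  intro c
  let F : W → E → ℝ := fun w => w.1
  constructor
  · intro hc
    have hinj := injOn_fst_of_surjective_eval F (s := (c : Set (E × ℤ))) hc.2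
    have ha := (bijective_eval_iff_of_injOn_fst F hinj).1 hc
    obtain ⟨g, hg⟩ := exists_snd_of_injOn_fst hinj
    obtain ⟨γ, hγ⟩ := (hunimod _ ha).2 g
    refine ⟨_, ha, γ.1, γ.2, eq_graph_of_forall_mem fun p hp => ?_⟩
    exact (congrFun hγ ⟨p.1, mem_image_of_mem _ hp⟩).trans (hg p hp)
  · rintro ⟨a, ha, γ, -, hc⟩
    change Bijective fun (w : W) (p : (c : Set (E × ℤ))) => F w p.1.1
    rw [hc, bijective_eval_iff_of_injOn_fst F (injOn_fst_graph a γ), fst_image_graph]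
    exact ha

/-- Bases of the loop and periodic arrangements are lattice translates of finite
bases: let `L ⊆ ℤ^E` be a subgroup and `W = span_ℝ(L) ⊆ ℝ^E`, and assume the
unimodularity property that whenever the coordinate projection `W → ℝ^a` is
bijective, so is the coordinate projection `L → ℤ^a`. Then a finite subset
`c ⊆ E × ℤ` is a base of the periodic arrangement (i.e. the evaluation map
`W → ℝ^c`, `w ↦ ((e,k) ↦ w e)`, is bijective) iff `c = { (e, γ e) : e ∈ a }`
for some base `a ⊆ E` of the finite arrangement and some `γ ∈ L`. -/
theorem periodic_bases_are_lattice_translates_of_finite_bases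
    {E : Type*} [Fintype E] (L : AddSubgroup (E → ℤ))
    (W : Submodule ℝ (E → ℝ))
    (hW : W = Submodule.span ℝ ((fun γ : E → ℤ => fun e => (γ e : ℝ)) '' (L : Set (E → ℤ))))
    (hunimod : ∀ a : Set E,
      Function.Bijective (fun (w : W) (e : a) => w.1 e.1) →
      Function.Bijective (fun (γ : L) (e : a) => γ.1 e.1)) :
    ∀ c : Finset (E × ℤ),
      Function.Bijective (fun (w : W) (p : c) => w.1 p.1.1) ↔
        ∃ a : Set E, Function.Bijective (fun (w : W) (e : a) => w.1 e.1) ∧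
          ∃ γ ∈ L, (c : Set (E × ℤ)) = {p : E × ℤ | p.1 ∈ a ∧ p.2 = γ p.1} :=
  periodic_bases_are_lattice_translates_of_finite_bases_general L W hunimod
end
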